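/- arXiv:1909.06499 — 3 statements merged into one kernel-verified Lean document; each statement's English description precedes it below -/
import Mathlib

section
/- If the total public demand P = Σ_i ⌊(1−β)θ_i⌋ is at most m·⌊(1−α)K⌋ (total public computation capacity over m servers) and θ_i ≤ W for all i, then there exists a feasible scheduling y with ζ_i = 0 for all i, i.e., no request is offloaded to the remote data center. -/
/-!
Lay the public demands `d₀, d₁, …` end to end on the integer line, so that AP `i` occupies
`[P i, P (i + 1))` with `P` the prefix sums, and cut `[0, m C)` into `m` consecutive blocks of
length `C`, one per server (other APs get an empty block). Sending from AP `i` to server `j`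
the length of the intersection of its interval with the block of `j` serves every demand,
because the demands fill `[0, ∑ d)` and `∑ d ≤ m C`, and loads no server beyond `C`, because
the intervals of the APs are disjoint.
-/

open Finset

/-- The length of the intersection of the integer intervals `[a, b)` and `[c, d)`. -/
def intervalOverlap (a b c d : ℤ) : ℤ := max 0 (min b d - max a c)

lemma intervalOverlap_nonneg (a b c d : ℤ) : 0 ≤ intervalOverlap a b c d := le_max_left _ _

lemma intervalOverlap_comm (a b c d : ℤ) : intervalOverlap a b c d = intervalOverlap c d a b := by
  simp only [intervalOverlap]; omega

lemma intervalOverlap_self_left (a c d : ℤ) : intervalOverlap a a c d = 0 := by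
  simp only [intervalOverlap]; omega

lemma intervalOverlap_add_intervalOverlap {a b e : ℤ} (c d : ℤ) (hab : a ≤ b) (hbe : b ≤ e) :
    intervalOverlap a b c d + intervalOverlap b e c d = intervalOverlap a e c d := by
  simp only [intervalOverlap]; omega

lemma intervalOverlap_eq_sub_of_le {a b c d : ℤ} (hca : c ≤ a) (hab : a ≤ b) (hbd : b ≤ d) :
    intervalOverlap a b c d = b - a := by
  simp only [intervalOverlap]; omega

lemma intervalOverlap_le_sub {c d : ℤ} (a b : ℤ) (hcd : c ≤ d) :
    intervalOverlap a b c d ≤ d - c := by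
  simp only [intervalOverlap]; omega

lemma sum_range_intervalOverlap_of_monotone {s : ℕ → ℤ} (hs : Monotone s) (c d : ℤ) (N : ℕ) :
    ∑ k ∈ range N, intervalOverlap (s k) (s (k + 1)) c d = intervalOverlap (s 0) (s N) c d := by
  induction N with
  | zero => simp [intervalOverlap_self_left]
  | succ N ih =>
    rw [sum_range_succ, ih, intervalOverlap_add_intervalOverlap c d (hs N.zero_le) (hs N.le_succ)]

/-- `prefixSum d k = d 0 + ⋯ + d (k - 1)`, truncated at the last index. -/
def prefixSum {n : ℕ} (d : Fin n → ℤ) (k : ℕ) : ℤ := ∑ i : Fin n with i.val < k, d i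

section prefixSum

variable {n : ℕ} (d : Fin n → ℤ)

@[simp] lemma prefixSum_zero : prefixSum d 0 = 0 := by simp [prefixSum]

lemma prefixSum_succ (i : Fin n) : prefixSum d (i + 1) = prefixSum d i + d i := by
  have : univ.filter (fun j : Fin n => j.val < i + 1) =
      insert i (univ.filter fun j : Fin n => j.val < i) := by
    ext j; simp [le_iff_eq_or_lt, Fin.val_inj]
  rw [prefixSum, prefixSum, this, sum_insert (by simp), add_comm]

lemma prefixSum_of_le {k : ℕ} (hk : n ≤ k) : prefixSum d k = ∑ i, d i := by
  rw [prefixSum, filter_true_of_mem fun i _ => i.isLt.trans_le hk]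

lemma monotone_prefixSum (hd : 0 ≤ d) : Monotone (prefixSum d) := fun _ _ hkl =>
  sum_le_sum_of_subset_of_nonneg (monotone_filter_right _ fun _ _ hi => hi.trans_le hkl)
    fun i _ _ => hd i

end prefixSum

theorem exists_transport_of_sum_le {n m : ℕ} (d : Fin n → ℤ) (c : Fin m → ℤ)
    (hd : 0 ≤ d) (hc : 0 ≤ c) (hdc : ∑ i, d i ≤ ∑ j, c j) :
    ∃ y : Fin n → Fin m → ℤ,
      (∀ i j, 0 ≤ y i j) ∧ (∀ i, ∑ j, y i j = d i) ∧ (∀ j, ∑ i, y i j ≤ c j) := by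
  set P := prefixSum d
  set Q := prefixSum c
  have hP := monotone_prefixSum d hd
  have hQ := monotone_prefixSum c hc
  refine ⟨fun i j => intervalOverlap (P i) (P (i + 1)) (Q j) (Q (j + 1)),
    fun i j => intervalOverlap_nonneg _ _ _ _, fun i => ?_, fun j => ?_⟩
  · calc ∑ j : Fin m, intervalOverlap (P i) (P (i + 1)) (Q j) (Q (j + 1))
        = ∑ j ∈ range m, intervalOverlap (Q j) (Q (j + 1)) (P i) (P (i + 1)) := by
          rw [← Fin.sum_univ_eq_sum_range]; simp only [intervalOverlap_comm (P i)]
      _ = intervalOverlap (P i) (P (i + 1)) 0 (∑ j, c j) := by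
          rw [sum_range_intervalOverlap_of_monotone hQ, intervalOverlap_comm, prefixSum_zero,
            prefixSum_of_le c le_rfl]
      _ = d i := by
          rw [intervalOverlap_eq_sub_of_le (prefixSum_zero d ▸ hP (Nat.zero_le _))
            (hP i.val.le_succ) ((hP i.isLt).trans ((prefixSum_of_le d le_rfl).trans_le hdc)),
            prefixSum_succ]
          ring
  · calc ∑ i : Fin n, intervalOverlap (P i) (P (i + 1)) (Q j) (Q (j + 1))
        = intervalOverlap (P 0) (P n) (Q j) (Q (j + 1)) := by
          rw [Fin.sum_univ_eq_sum_range (fun i => intervalOverlap (P i) (P (i + 1)) _ _),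
            sum_range_intervalOverlap_of_monotone hP]
      _ ≤ Q (j + 1) - Q j := intervalOverlap_le_sub _ _ (hQ j.val.le_succ)
      _ = c j := by rw [show Q (j + 1) = Q j + c j from prefixSum_succ c j]; ring

theorem stmt4_general (n m : ℕ) (x : Fin n → Bool) (θ : Fin n → ℝ) (α β K : ℝ)
    (hm : (Finset.univ.filter (fun i => x i = true)).card = m)
    (hθ : ∀ i, 0 ≤ θ i)
    (hα1 : α ≤ 1) (hβ1 : β ≤ 1) (hK : 0 ≤ K)
    (hcap : ∑ i, ⌊(1 - β) * θ i⌋ ≤ (m : ℤ) * ⌊(1 - α) * K⌋) :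
    ∃ y : Fin n → Fin n → ℤ,
      (∀ i j, 0 ≤ y i j) ∧
      (∀ i j, x j = false → y i j = 0) ∧
      (∀ i, ∑ j, y i j = ⌊(1 - β) * θ i⌋) ∧
      (∀ j, ∑ i, y i j ≤ ⌊(1 - α) * K⌋) ∧
      (∀ j, max 0 (∑ i, y i j - ⌊(1 - α) * K⌋) = 0) := by
  set C := ⌊(1 - α) * K⌋
  have hC : 0 ≤ C := Int.floor_nonneg.2 (mul_nonneg (by linarith) hK)
  set c : Fin n → ℤ := fun j => if x j then C else 0
  have hc : 0 ≤ c := fun j => by by_cases hj : x j <;> simp [c, hj, hC]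
  have hsum_c : ∑ j, c j = m * C := by simp [c, sum_ite, hm]
  obtain ⟨y, hy0, hrow, hcol⟩ := exists_transport_of_sum_le (fun i => ⌊(1 - β) * θ i⌋) c
    (fun i => Int.floor_nonneg.2 (mul_nonneg (by linarith) (hθ i))) hc (hsum_c ▸ hcap)
  have hcolC : ∀ j, ∑ i, y i j ≤ C := fun j =>
    (hcol j).trans (by by_cases hj : x j <;> simp [c, hj, hC])
  refine ⟨y, hy0, fun i j hj => ?_, hrow, hcolC, fun j => max_eq_left (by linarith [hcolC j])⟩
  have hcol0 : ∑ i, y i j ≤ 0 := by simpa [c, hj] using hcol j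
  exact (sum_eq_zero_iff_of_nonneg fun i _ => hy0 i j).1
    (le_antisymm hcol0 (sum_nonneg fun i _ => hy0 i j)) i (mem_univ i)

/-- If the total public demand `Σᵢ ⌊(1-β)θᵢ⌋` is at most the total public
capacity `m·⌊(1-α)K⌋` of the `m` servers, and `θᵢ ≤ W` for all `i`, then there
is a feasible scheduling routing every public request to some server without
exceeding any server's public capacity, so that no request is offloaded to the
cloud (`ζᵢ = 0` for all `i`). -/
theorem stmt4 (n m : ℕ) (x : Fin n → Bool) (θ : Fin n → ℝ) (α β K W : ℝ)
    (hm : (Finset.univ.filter (fun i => x i = true)).card = m)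
    (hθ : ∀ i, 0 ≤ θ i) (hθW : ∀ i, θ i ≤ W)
    (hα0 : 0 ≤ α) (hα1 : α ≤ 1) (hβ0 : 0 ≤ β) (hβ1 : β ≤ 1) (hK : 0 ≤ K)
    (hcap : ∑ i, ⌊(1 - β) * θ i⌋ ≤ (m : ℤ) * ⌊(1 - α) * K⌋) :
    ∃ y : Fin n → Fin n → ℤ,
      (∀ i j, 0 ≤ y i j) ∧
      (∀ i j, x j = false → y i j = 0) ∧
      (∀ i, ∑ j, y i j = ⌊(1 - β) * θ i⌋) ∧
      (∀ j, ∑ i, y i j ≤ ⌊(1 - α) * K⌋) ∧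
      (∀ j, max 0 (∑ i, y i j - ⌊(1 - α) * K⌋) = 0) :=
  stmt4_general n m x θ α β K hm hθ hα1 hβ1 hK hcap
end

section
/- In the IKIW sub-problem, the total number of requests offloaded to the cloud across all servers equals max{0, Σ_i ⌊(1−β)χ_i⌋_pub − m⌊(1−α)K⌋}, where the served public demand per AP after communication blocking is ⌊χ_i − βθ_i⌋ for server-hosting APs and ⌊χ_i⌋ for others, provided every server is saturated in an optimal scheduling when total demand exceeds total capacity. -/
open Finset

theorem sum_max_zero_sub_eq_sum_sub_card_smul {ι α : Type*} [Fintype ι] [AddCommGroup α]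
    [LinearOrder α] [IsOrderedAddMonoid α] (s : Finset ι) (L : ι → α) {c : α} (hc : 0 ≤ c)
    (hL : ∀ j ∉ s, L j = 0) (hsat : ∀ j ∈ s, c ≤ L j) :
    ∑ j, max 0 (L j - c) = ∑ j, L j - #s • c := by
  have hsupp (f : ι → α) (hf : ∀ j ∉ s, f j = 0) : ∑ j ∈ s, f j = ∑ j, f j :=
    sum_subset (subset_univ s) fun j _ hj => hf j hj
  rw [← hsupp _ fun j hj => by simp [hL j hj, hc], ← hsupp L hL, ← sum_const, ← sum_sub_distrib]
  exact sum_congr rfl fun j hj => max_eq_right (sub_nonneg.2 (hsat j hj))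

theorem stmt13_general (n m : ℕ) (x : Fin n → Bool)
    (y : Fin n → Fin n → ℤ) (ζ : Fin n → ℤ) (D cap : ℤ)
    (hm : (Finset.univ.filter (fun i => x i = true)).card = m)
    (hcap0 : 0 ≤ cap)
    (hexcess : (m : ℤ) * cap < D)
    (hynoserver : ∀ i j, x j = false → y i j = 0)
    (htotal : ∑ j, ∑ i, y i j = D)
    (hζ : ∀ j, ζ j = max 0 (∑ i, y i j - cap))
    (hsat : ∀ j, x j = true → cap ≤ ∑ i, y i j) :
    ∑ j, ζ j = max 0 (D - (m : ℤ) * cap) ∧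
    ∑ j, ζ j = D - (m : ℤ) * cap := by
  set servers := univ.filter (fun i => x i = true)
  have hidle : ∀ j ∉ servers, ∑ i, y i j = 0 := fun j hj =>
    sum_eq_zero fun i _ => hynoserver i j (by simpa [servers] using hj)
  have hoffload : ∑ j, ζ j = D - m * cap := by
    rw [sum_congr rfl fun j _ => hζ j, sum_max_zero_sub_eq_sum_sub_card_smul servers _ hcap0 hidle
      fun j hj => hsat j (by simpa [servers] using hj), htotal, hm, nsmul_eq_mul]
  exact ⟨by rw [hoffload, max_eq_right (by linarith)], hoffload⟩

/-- IKIW: if every server is saturated (receives at least its public capacity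
`cap = ⌊(1-α)K⌋`), the post-blocking public demand `D` is fully routed to the
servers, and `D` exceeds the total capacity `m·cap`, then the total cloud
offload equals `max 0 (D - m·cap) = D - m·cap`. -/
theorem stmt13 (n m : ℕ) (x : Fin n → Bool) (θ : Fin n → ℝ)
    (y : Fin n → Fin n → ℤ) (ζ : Fin n → ℤ) (α β K W : ℝ) (D cap : ℤ)
    (hm : (Finset.univ.filter (fun i => x i = true)).card = m)
    (hθ : ∀ i, 0 ≤ θ i)
    (hcap : cap = ⌊(1 - α) * K⌋) (hcap0 : 0 ≤ cap)
    (hD : D = ∑ i ∈ Finset.univ.filter (fun i => x i = true),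
                ⌊min (θ i) W - β * θ i⌋
            + ∑ i ∈ Finset.univ.filter (fun i => x i = false),
                ⌊min (θ i) W⌋)
    (hexcess : (m : ℤ) * cap < D)
    (hy0 : ∀ i j, 0 ≤ y i j)
    (hynoserver : ∀ i j, x j = false → y i j = 0)
    (htotal : ∑ j, ∑ i, y i j = D)
    (hζ : ∀ j, ζ j = max 0 (∑ i, y i j - cap))
    (hsat : ∀ j, x j = true → cap ≤ ∑ i, y i j) :
    ∑ j, ζ j = max 0 (D - (m : ℤ) * cap) ∧
    ∑ j, ζ j = D - (m : ℤ) * cap :=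
  stmt13_general n m x y ζ D cap hm hcap0 hexcess hynoserver htotal hζ hsat
end

section
/- If the cloud delay λ is strictly greater than every inter-AP delay ξ_{i,j}, then any optimal scheduling offloads a request to the cloud only if every server's public capacity is exhausted: in an optimal solution, Σ_i ζ_i > 0 implies Σ_j y_{j,i'} = ⌊(1−α)K⌋ for every server-hosting AP i'. -/
/-!
Exchange argument: if some demand `ε > 0` of an AP `a` goes to the cloud while an open server `b`
still has spare capacity, rerouting `ε` from the cloud to `b` keeps the schedule feasible and
changes the cost by `(ξ a b - λ) ε < 0`, contradicting optimality.
-/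

open Finset

namespace OffloadingSchedule

variable {n : ℕ}

structure IsFeasible (x : Fin n → Bool) (d : Fin n → ℝ) (cap : ℝ)
    (y : Fin n → Fin n → ℝ) (ζ : Fin n → ℝ) : Prop where
  route_nonneg : ∀ i j, 0 ≤ y i j
  cloud_nonneg : ∀ i, 0 ≤ ζ i
  route_eq_zero_of_not_server : ∀ i j, x j = false → y i j = 0
  route_add_cloud_eq : ∀ i, ∑ j, y i j + ζ i = d i
  sum_route_le_cap : ∀ j, x j = true → ∑ i, y i j ≤ cap

theorem isFeasible_iff {x : Fin n → Bool} {d : Fin n → ℝ} {cap : ℝ}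
    {y : Fin n → Fin n → ℝ} {ζ : Fin n → ℝ} :
    IsFeasible x d cap y ζ ↔
      ((∀ i j, 0 ≤ y i j) ∧ (∀ i, 0 ≤ ζ i) ∧ (∀ i j, x j = false → y i j = 0) ∧
        (∀ i, ∑ j, y i j + ζ i = d i) ∧ (∀ j, x j = true → ∑ i, y i j ≤ cap)) :=
  ⟨fun h => ⟨h.1, h.2, h.3, h.4, h.5⟩, fun ⟨h₁, h₂, h₃, h₄, h₅⟩ => ⟨h₁, h₂, h₃, h₄, h₅⟩⟩

/-- The objective without the blocking term `Σ π_i χ_i`, which does not depend on `(y, ζ)`. -/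
def cost (lam : ℝ) (ξ : Fin n → Fin n → ℝ) (y : Fin n → Fin n → ℝ) (ζ : Fin n → ℝ) : ℝ :=
  ∑ i, lam * ζ i + ∑ i, ∑ j, ξ i j * y i j

/-- `y i j` is the demand of AP `i` served by the server at AP `j`. -/
def reroute (y : Fin n → Fin n → ℝ) (a b : Fin n) (ε : ℝ) : Fin n → Fin n → ℝ :=
  y + Pi.single a (Pi.single b ε)

section reroute

variable (y : Fin n → Fin n → ℝ) (a b : Fin n) (ε : ℝ)

theorem reroute_apply (i j : Fin n) :
    reroute y a b ε i j = y i j + if i = a ∧ j = b then ε else 0 := by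
  by_cases hi : i = a <;> by_cases hj : j = b <;> simp [reroute, hi, hj]

theorem sum_reroute_row (i : Fin n) :
    ∑ j, reroute y a b ε i j = ∑ j, y i j + (Pi.single a ε : Fin n → ℝ) i := by
  by_cases h : i = a <;> simp [reroute_apply, sum_add_distrib, h]

theorem sum_reroute_col (j : Fin n) :
    ∑ i, reroute y a b ε i j = ∑ i, y i j + (Pi.single b ε : Fin n → ℝ) j := by
  by_cases h : j = b <;> simp [reroute_apply, sum_add_distrib, h]

theorem sum_mul_reroute (ξ : Fin n → Fin n → ℝ) :
    ∑ i, ∑ j, ξ i j * reroute y a b ε i j = ∑ i, ∑ j, ξ i j * y i j + ξ a b * ε := by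
  simp [reroute_apply, mul_add, sum_add_distrib, ite_and]

theorem cost_reroute (lam : ℝ) (ξ : Fin n → Fin n → ℝ) (ζ : Fin n → ℝ) :
    cost lam ξ (reroute y a b ε) (ζ - Pi.single a ε) = cost lam ξ y ζ - (lam - ξ a b) * ε := by
  simp only [cost, sum_mul_reroute, Pi.sub_apply, mul_sub, sum_sub_distrib]
  simp only [Pi.single_apply, mul_ite, mul_zero, sum_ite_eq', mem_univ, ↓reduceIte]
  ring

end reroute

section feasibility

variable {x : Fin n → Bool} {d : Fin n → ℝ} {cap : ℝ} {y : Fin n → Fin n → ℝ} {ζ : Fin n → ℝ}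

theorem IsFeasible.reroute (h : IsFeasible x d cap y ζ) {a b : Fin n} {ε : ℝ}
    (hb : x b = true) (hε : 0 ≤ ε) (hεζ : ε ≤ ζ a) (hεcap : ∑ i, y i b + ε ≤ cap) :
    IsFeasible x d cap (reroute y a b ε) (ζ - Pi.single a ε) where
  route_nonneg i j := by
    rw [reroute_apply]
    have := h.route_nonneg i j
    split_ifs <;> linarith
  cloud_nonneg i := by
    have := h.cloud_nonneg i
    by_cases hi : i = a
    · subst hi; simpa using hεζ
    · simpa [hi] using this
  route_eq_zero_of_not_server i j hj := by
    have hjb : j ≠ b := by rintro rfl; simp_all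
    simp [reroute_apply, hjb, h.route_eq_zero_of_not_server i j hj]
  route_add_cloud_eq i := by
    rw [sum_reroute_row, Pi.sub_apply, ← h.route_add_cloud_eq i]
    ring
  sum_route_le_cap j hj := by
    rw [sum_reroute_col]
    by_cases hjb : j = b
    · subst hjb; simpa using hεcap
    · simpa [hjb] using h.sum_route_le_cap j hj

theorem IsFeasible.sum_route_eq_cap_of_optimal {lam : ℝ} {ξ : Fin n → Fin n → ℝ}
    (h : IsFeasible x d cap y ζ) (hlam : ∀ i j, ξ i j < lam)
    (hopt : ∀ y' ζ', IsFeasible x d cap y' ζ' → cost lam ξ y ζ ≤ cost lam ξ y' ζ')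
    (hcloud : 0 < ∑ i, ζ i) {b : Fin n} (hb : x b = true) :
    ∑ i, y i b = cap := by
  obtain ⟨a, -, ha⟩ : ∃ a ∈ univ, (0 : ℝ) < ζ a :=
    exists_lt_of_sum_lt (by simpa using hcloud)
  by_contra hne
  have hslack : 0 < cap - ∑ i, y i b := sub_pos.2 ((h.sum_route_le_cap b hb).lt_of_ne hne)
  set ε := min (ζ a) (cap - ∑ i, y i b)
  have hε : 0 < ε := lt_min ha hslack
  have hεcap : ∑ i, y i b + ε ≤ cap := by linarith [min_le_right (ζ a) (cap - ∑ i, y i b)]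
  have hle := hopt _ _ (h.reroute hb hε.le (min_le_left _ _) hεcap)
  rw [cost_reroute] at hle
  linarith [mul_pos (sub_pos.2 (hlam a b)) hε]

end feasibility

end OffloadingSchedule

open OffloadingSchedule in
theorem stmt14_general (n : ℕ) (x : Fin n → Bool) (θ π : Fin n → ℝ)
    (ξ : Fin n → Fin n → ℝ) (W lam : ℝ)
    (d : Fin n → ℝ) (cap : ℝ)
    (hlam : ∀ i j, ξ i j < lam)
    (Feasible : (Fin n → Fin n → ℝ) → (Fin n → ℝ) → Prop)
    (hFeasible : ∀ y ζ, Feasible y ζ ↔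
      ((∀ i j, 0 ≤ y i j) ∧ (∀ i, 0 ≤ ζ i) ∧
       (∀ i j, x j = false → y i j = 0) ∧
       -- all post-blocking public demand is routed to servers or to the cloud
       (∀ i, ∑ j, y i j + ζ i = d i) ∧
       -- no server receives more than its public capacity
       (∀ j, x j = true → ∑ i, y i j ≤ cap)))
    (obj : (Fin n → Fin n → ℝ) → (Fin n → ℝ) → ℝ)
    (hobj : ∀ y ζ, obj y ζ =
      ∑ i, lam * ζ i + ∑ i, π i * min (θ i) W + ∑ i, ∑ j, ξ i j * y i j)
    (y : Fin n → Fin n → ℝ) (ζ : Fin n → ℝ)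
    (hfeas : Feasible y ζ)
    (hopt : ∀ y' ζ', Feasible y' ζ' → obj y ζ ≤ obj y' ζ') :
    0 < ∑ i, ζ i → ∀ i', x i' = true → ∑ j, y j i' = cap := by
  have hFeasible' : ∀ y ζ, Feasible y ζ ↔ IsFeasible x d cap y ζ :=
    fun y ζ => (hFeasible y ζ).trans isFeasible_iff.symm
  have hobj' : ∀ y ζ, obj y ζ = cost lam ξ y ζ + ∑ i, π i * min (θ i) W := by
    intro y ζ
    rw [hobj, cost]
    ring
  have hopt' : ∀ y' ζ', IsFeasible x d cap y' ζ' → cost lam ξ y ζ ≤ cost lam ξ y' ζ' := by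
    intro y' ζ' h'
    have hle := hopt y' ζ' ((hFeasible' y' ζ').2 h')
    rwa [hobj', hobj', add_le_add_iff_right] at hle
  intro hcloud i' hi'
  exact ((hFeasible' y ζ).1 hfeas).sum_route_eq_cap_of_optimal hlam hopt' hcloud hi'

/-- If the cloud delay `λ` strictly exceeds every inter-AP delay `ξᵢⱼ`, then
in any optimal scheduling, offloading occurs only if every server's public
capacity is exhausted: `Σᵢ ζᵢ > 0` implies `Σⱼ y_{j,i'} = ⌊(1-α)K⌋` for every
server-hosting AP `i'`. -/
theorem stmt14 (n : ℕ) (x : Fin n → Bool) (θ π : Fin n → ℝ)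
    (ξ : Fin n → Fin n → ℝ) (α β K W lam : ℝ)
    (d : Fin n → ℝ) (cap : ℝ)
    (hd : ∀ i, d i = (⌊(1 - β) * θ i⌋ : ℝ)) (hcap : cap = (⌊(1 - α) * K⌋ : ℝ))
    (hπ : ∀ i, 0 ≤ π i) (hξ : ∀ i j, 0 ≤ ξ i j)
    (hlam : ∀ i j, ξ i j < lam) (hlamπ : ∀ i, π i < lam)
    (Feasible : (Fin n → Fin n → ℝ) → (Fin n → ℝ) → Prop)
    (hFeasible : ∀ y ζ, Feasible y ζ ↔
      ((∀ i j, 0 ≤ y i j) ∧ (∀ i, 0 ≤ ζ i) ∧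
       (∀ i j, x j = false → y i j = 0) ∧
       -- all post-blocking public demand is routed to servers or to the cloud
       (∀ i, ∑ j, y i j + ζ i = d i) ∧
       -- no server receives more than its public capacity
       (∀ j, x j = true → ∑ i, y i j ≤ cap)))
    (obj : (Fin n → Fin n → ℝ) → (Fin n → ℝ) → ℝ)
    (hobj : ∀ y ζ, obj y ζ =
      ∑ i, lam * ζ i + ∑ i, π i * min (θ i) W + ∑ i, ∑ j, ξ i j * y i j)
    (y : Fin n → Fin n → ℝ) (ζ : Fin n → ℝ)
    (hfeas : Feasible y ζ)
    (hopt : ∀ y' ζ', Feasible y' ζ' → obj y ζ ≤ obj y' ζ') :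
    0 < ∑ i, ζ i → ∀ i', x i' = true → ∑ j, y j i' = cap :=
  stmt14_general n x θ π ξ W lam d cap hlam Feasible hFeasible obj hobj y ζ hfeas hopt
end
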